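/- arXiv:2010.09097 — 2 statements merged into one kernel-verified Lean document; each statement's English description precedes it below -/
import Mathlib

section
/- Let G be a finite group, H ≤ G, and X₁,…,Xₙ be H-sets. There is a G-equivariant bijection between Coind_H^G(X₁ ⊔ … ⊔ Xₙ) (the set of H-equivariant maps G → X₁ ⊔ … ⊔ Xₙ) and the disjoint union over G-orbit representatives [λ] ∈ Hom(G/H, [n])/G of the induced G-sets Ind_{G_λ}^G F_λ(X₁,…,Xₙ), where F_λ(X₁,…,Xₙ) is the G_λ-subset of Coind_H^G(X₁ ⊔ … ⊔ Xₙ) consisting of those maps whose composition with the 'component' map to [n] equals λ. -/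
/-!
A `G`-set `Y` with an equivariant map `π : Y → Λ` splits along the `G`-orbits of `Λ`: for a
representative `λ` of an orbit, `[g, y] ↦ g • y` is a bijection from `G ×_{G_λ} π⁻¹(λ)` onto
`π⁻¹(G • λ)`. It is onto because every point of `G • λ` is a translate of `λ`, and injective because
`g • y = g' • y'` with `y, y'` over `λ` forces `g⁻¹ g'` to fix `λ`. The theorem is the case
`Y = Coind_H^G (X₁ ⊔ ⋯ ⊔ Xₙ)`, `Λ = Hom(G/H, [n])` and `π` the component map, whose fibres are
the `F_λ`.
-/


variable {G : Type} [Group G]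

/-- The action of `G` on functions `G ⧸ H → Fin n` by `(g • l) x = l (g⁻¹ • x)`. -/
instance arrowMulAction (H : Subgroup G) (n : ℕ) : MulAction G ((G ⧸ H) → Fin n) where
  smul g l := fun x => l (g⁻¹ • x)
  one_smul l := by funext x; show l ((1:G)⁻¹ • x) = l x; simp
  mul_smul a b l := by
    funext x
    show l ((a * b)⁻¹ • x) = l (b⁻¹ • a⁻¹ • x)
    rw [mul_inv_rev, mul_smul]

/-- The stabilizer `G_λ` of `λ : G ⧸ H → Fin n`. -/
def stab (H : Subgroup G) {n : ℕ} (l : G ⧸ H → Fin n) : Subgroup G where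
  carrier := {g | ∀ x, l (g⁻¹ • x) = l x}
  one_mem' := by intro x; simp
  mul_mem' := by
    intro a b ha hb x
    simp only [Set.mem_setOf_eq] at *
    rw [mul_inv_rev, mul_smul, hb, ha]
  inv_mem' := by
    intro a ha x
    simp only [Set.mem_setOf_eq] at *
    have h := ha (a • x)
    rw [inv_smul_smul] at h
    rw [inv_inv]
    exact h.symm

/-- Coinduction: `H`-equivariant maps `G → X`, a `G`-set. -/
def Coind (H : Subgroup G) (X : Type) [MulAction H X] : Type :=
  {f : G → X // ∀ (g : G) (h : H), f (g * h) = h⁻¹ • f g}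

instance Coind.mulAction (H : Subgroup G) (X : Type) [MulAction H X] :
    MulAction G (Coind H X) where
  smul g f := ⟨fun g' => f.1 (g⁻¹ * g'), by
    intro g' h
    show f.1 (g⁻¹ * (g' * h)) = h⁻¹ • f.1 (g⁻¹ * g')
    rw [← mul_assoc]
    exact f.2 (g⁻¹ * g') h⟩
  one_smul f := Subtype.ext (funext fun g' => by show f.1 ((1:G)⁻¹ * g') = f.1 g'; simp)
  mul_smul a b f := Subtype.ext (funext fun g' => by
    show f.1 ((a * b)⁻¹ * g') = f.1 (b⁻¹ * (a⁻¹ * g'))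
    rw [mul_inv_rev, mul_assoc])

instance sigmaMulAction (H : Subgroup G) {n : ℕ} (X : Fin n → Type)
    [∀ i, MulAction H (X i)] : MulAction H (Σ i, X i) where
  smul h p := ⟨p.1, h • p.2⟩
  one_smul p := by cases p with | mk i x => show (⟨i, (1:H) • x⟩ : Σ i, X i) = ⟨i, x⟩; rw [one_smul]
  mul_smul a b p := by
    cases p with | mk i x =>
      show (⟨i, (a * b) • x⟩ : Σ i, X i) = ⟨i, a • b • x⟩
      rw [mul_smul]

/-- The map recording in which summand an element of `Coind_H^G (X₁ ⊔ ⋯ ⊔ Xₙ)` takes its values. -/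
def component (H : Subgroup G) {n : ℕ} (X : Fin n → Type) [∀ i, MulAction H (X i)]
    (f : Coind H (Σ i, X i)) : G ⧸ H → Fin n :=
  Quotient.lift (fun g => (f.1 g).1) (by
    intro a b hab
    have hmem : a⁻¹ * b ∈ H := QuotientGroup.leftRel_apply.mp hab
    show (f.1 a).1 = (f.1 b).1
    have hb : f.1 b = f.1 (a * ((⟨a⁻¹ * b, hmem⟩ : H) : G)) := by
      simp [mul_inv_cancel_left]
    rw [hb, f.2 a ⟨a⁻¹ * b, hmem⟩]
    rfl)

/-- `F_λ`: the fiber of the component map over `λ`. -/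
def Flambda (H : Subgroup G) {n : ℕ} (X : Fin n → Type) [∀ i, MulAction H (X i)]
    (l : G ⧸ H → Fin n) : Type :=
  {f : Coind H (Σ i, X i) // component H X f = l}

theorem component_smul (H : Subgroup G) {n : ℕ} (X : Fin n → Type) [∀ i, MulAction H (X i)]
    (g : G) (f : Coind H (Σ i, X i)) :
    component H X (g • f) = g • component H X f := by
  funext x
  induction x using QuotientGroup.induction_on with
  | H g' => rfl

/-- `F_λ` is a `G_λ`-set. -/
instance Flambda.mulAction (H : Subgroup G) {n : ℕ} (X : Fin n → Type)
    [∀ i, MulAction H (X i)] (l : G ⧸ H → Fin n) :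
    MulAction (stab H l) (Flambda H X l) where
  smul k f := ⟨(k : G) • f.1, by
    rw [component_smul, f.2]
    funext x
    exact k.2 x⟩
  one_smul f := Subtype.ext (by
    show ((1 : stab H l) : G) • f.1 = f.1
    rw [Subgroup.coe_one, one_smul])
  mul_smul a b f := Subtype.ext (by
    show ((a * b : stab H l) : G) • f.1 = (a : G) • (b : G) • f.1
    rw [Subgroup.coe_mul, mul_smul])

/-- The induced `G`-set `Ind_K^G Y = G ×_K Y`. -/
def indSetoid (K : Subgroup G) (Y : Type) [MulAction K Y] : Setoid (G × Y) where
  r p q := ∃ k : K, q.1 = p.1 * k ∧ q.2 = k⁻¹ • p.2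
  iseqv := by
    constructor
    · intro p; exact ⟨1, by simp, by simp⟩
    · rintro p q ⟨k, h1, h2⟩
      refine ⟨k⁻¹, ?_, ?_⟩
      · rw [h1]; simp [mul_assoc]
      · rw [h2]; simp
    · rintro p q r ⟨k, h1, h2⟩ ⟨k', h1', h2'⟩
      refine ⟨k * k', ?_, ?_⟩
      · rw [h1', h1]; push_cast; rw [mul_assoc]
      · rw [h2', h2, ← mul_smul, ← mul_inv_rev]

def Ind (K : Subgroup G) (Y : Type) [MulAction K Y] : Type :=
  Quotient (indSetoid K Y)

instance Ind.mulAction (K : Subgroup G) (Y : Type) [MulAction K Y] :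
    MulAction G (Ind K Y) where
  smul g := Quotient.map (fun p => (g * p.1, p.2)) (by
    rintro p q ⟨k, h1, h2⟩
    refine ⟨k, ?_, h2⟩
    show g * q.1 = g * p.1 * k
    rw [h1, mul_assoc])
  one_smul p := by
    induction p using Quotient.inductionOn with
    | h p => exact Quotient.sound ⟨1, by simp, by simp⟩
  mul_smul a b p := by
    induction p using Quotient.inductionOn with
    | h p => exact Quotient.sound ⟨1, by simp [mul_assoc], by simp⟩

open MulAction

section FiberDecomposition

variable {Y Λ : Type} [MulAction G Y] [MulAction G Λ] (π : Y → Λ) (K : Λ → Subgroup G)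
  [fiberAction : ∀ l, MulAction (K l) {y // π y = l}]

theorem exists_smul_out_eq (l : Λ) : ∃ g : G, g • (Quotient.mk (orbitRel G Λ) l).out = l := by
  obtain ⟨g, hg⟩ := Quotient.mk_out (s := orbitRel G Λ) l
  exact ⟨g⁻¹, by rw [← hg, inv_smul_smul]⟩

/-- `∐_{[λ] ∈ Λ/G} Ind_{K λ}^G π⁻¹(λ)`, with `λ` the representative `o.out` of the orbit `o`. -/
abbrev SigmaIndFiber : Type :=
  Σ o : Quotient (orbitRel G Λ), Ind (K o.out) {y // π y = o.out}

noncomputable def SigmaIndFiber.toSelf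
    (hsmul : ∀ l (k : K l) (y : {y // π y = l}), ((k • y : {y // π y = l}) : Y) = (k : G) • y.1)
    (p : SigmaIndFiber π K) : Y :=
  Quotient.liftOn p.2 (fun q => q.1 • q.2.1) <| by
    rintro ⟨g, y⟩ ⟨g', y'⟩ ⟨k, hg : g' = g * k, hy : y' = k⁻¹ • y⟩
    simp only [hg, hy, hsmul, smul_smul, mul_assoc, Subgroup.coe_inv, mul_inv_cancel, mul_one]

variable {π K}

namespace SigmaIndFiber

variable (hsmul : ∀ l (k : K l) (y : {y // π y = l}), ((k • y : {y // π y = l}) : Y) = (k : G) • y.1)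

theorem toSelf_smul (g : G) (p : SigmaIndFiber π K) :
    toSelf π K hsmul ⟨p.1, g • p.2⟩ = g • toSelf π K hsmul p := by
  obtain ⟨o, q⟩ := p
  induction q using Quotient.inductionOn with
  | h q => exact mul_smul g q.1 q.2.1

theorem toSelf_surjective (hπ : ∀ (g : G) y, π (g • y) = g • π y) :
    Function.Surjective (toSelf π K hsmul) := by
  intro y
  obtain ⟨g, hg⟩ := exists_smul_out_eq (G := G) (π y)
  have hy : π (g⁻¹ • y) = (Quotient.mk (orbitRel G Λ) (π y)).out := by
    rw [hπ, inv_smul_eq_iff, hg]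
  exact ⟨⟨_, Quotient.mk _ (g, ⟨g⁻¹ • y, hy⟩)⟩, smul_inv_smul g y⟩

theorem toSelf_injective (hπ : ∀ (g : G) y, π (g • y) = g • π y)
    (hK : ∀ l, stabilizer G l ≤ K l) :
    Function.Injective (toSelf π K hsmul) := by
  rintro ⟨o, q⟩ ⟨o', q'⟩ h
  induction q using Quotient.inductionOn with
  | h q =>
  induction q' using Quotient.inductionOn with
  | h q' =>
  obtain ⟨g, y, hy⟩ := q
  obtain ⟨g', y', hy'⟩ := q'
  change g • y = g' • y' at h
  have hπh : g • o.out = g' • o'.out := by rw [← hy, ← hy', ← hπ, ← hπ, h]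
  obtain rfl : o = o' := by
    rw [← Quotient.out_eq o, ← Quotient.out_eq o', ← orbitRel.Quotient.quotient_smul_eq (g := g),
      hπh, orbitRel.Quotient.quotient_smul_eq]
  have hk : g⁻¹ * g' ∈ K o.out := hK _ <| by
    rw [mem_stabilizer_iff, mul_smul, ← hπh, inv_smul_smul]
  refine congrArg (Sigma.mk o) <|
    Quotient.sound ⟨⟨g⁻¹ * g', hk⟩, (mul_inv_cancel_left g g').symm, ?_⟩
  apply Subtype.ext
  rw [hsmul]
  simp only [Subgroup.coe_inv, mul_inv_rev, inv_inv, mul_smul, h, inv_smul_smul]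

end SigmaIndFiber

theorem exists_equivariant_equiv_sigmaIndFiber
    (hsmul : ∀ l (k : K l) (y : {y // π y = l}), ((k • y : {y // π y = l}) : Y) = (k : G) • y.1)
    (hπ : ∀ (g : G) y, π (g • y) = g • π y)
    (hK : ∀ l, stabilizer G l ≤ K l) :
    ∃ e : Y ≃ SigmaIndFiber π K, ∀ (g : G) (y : Y), e (g • y) = ⟨(e y).1, g • (e y).2⟩ := by
  let e := Equiv.ofBijective _ ⟨SigmaIndFiber.toSelf_injective hsmul hπ hK,
    SigmaIndFiber.toSelf_surjective hsmul hπ⟩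
  refine ⟨e.symm, fun g y => e.injective ?_⟩
  change _ = SigmaIndFiber.toSelf π K hsmul ⟨_, _⟩
  rw [SigmaIndFiber.toSelf_smul, Equiv.apply_symm_apply]
  exact congrArg _ (e.apply_symm_apply y).symm

end FiberDecomposition

theorem stmt_3_general (H : Subgroup G) (n : ℕ) (X : Fin n → Type)
    [∀ i, MulAction H (X i)] :
    ∃ e : Coind H (Σ i, X i) ≃
        (Σ o : Quotient (MulAction.orbitRel G ((G ⧸ H) → Fin n)),
          Ind (stab H (Quotient.out o)) (Flambda H X (Quotient.out o))),
      ∀ (g : G) (f : Coind H (Σ i, X i)),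
        e (g • f) = ⟨(e f).1, g • (e f).2⟩ :=
  exists_equivariant_equiv_sigmaIndFiber (K := stab H)
    (fiberAction := fun l => Flambda.mulAction H X l)
    (fun _ _ _ => rfl) (component_smul H X) fun _ _ hg x => congrFun hg x

/-- Decomposition of coinduction: `Coind_H^G (X₁ ⊔ ⋯ ⊔ Xₙ)` is `G`-equivariantly
in bijection with the disjoint union over orbit representatives `[λ]` of the induced
`G`-sets `Ind_{G_λ}^G F_λ(X₁, …, Xₙ)`. -/
theorem stmt_3 [Finite G] (H : Subgroup G) (n : ℕ) (X : Fin n → Type)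
    [∀ i, MulAction H (X i)] :
    ∃ e : Coind H (Σ i, X i) ≃
        (Σ o : Quotient (MulAction.orbitRel G ((G ⧸ H) → Fin n)),
          Ind (stab H (Quotient.out o)) (Flambda H X (Quotient.out o))),
      ∀ (g : G) (f : Coind H (Σ i, X i)),
        e (g • f) = ⟨(e f).1, g • (e f).2⟩ :=
  stmt_3_general H n X
end

section
/- Let G be a finite group, H, K ≤ G subgroups, and X an H-set. Choose a set of representatives g₁,…,g_r for the double cosets K\G/H. Then there is a K-equivariant bijection Res_K^G Coind_H^G(X) ≅ ∏_{i=1}^r Coind_{H_{g_i}}^K Res_{H_{g_i}}^H X, where H_g = K ∩ gHg⁻¹ and H_g acts on X via h·x = (g⁻¹hg)·x (Mackey double coset formula for coinduction of G-sets). -/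
variable {G : Type} [Group G]

/-- The conjugate subgroup `g H g⁻¹`. -/
def conjSub (H : Subgroup G) (g : G) : Subgroup G where
  carrier := {x | g⁻¹ * x * g ∈ H}
  one_mem' := by simpa using H.one_mem
  mul_mem' := by
    intro a b ha hb
    simp only [Set.mem_setOf_eq] at *
    convert mul_mem ha hb using 1
    group
  inv_mem' := by
    intro a ha
    simp only [Set.mem_setOf_eq] at *
    convert inv_mem ha using 1
    group

/-- The action of `H_g = K ∩ gHg⁻¹` (as a subgroup of `K`) on an `H`-set `X`
via `h • x = (g⁻¹ h g) • x`. -/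
def dcAction (H K : Subgroup G) (g : G) (X : Type) [MulAction H X] :
    MulAction ((K ⊓ conjSub H g).subgroupOf K) X where
  smul k x :=
    (⟨g⁻¹ * ((k : K) : G) * g, (Subgroup.mem_inf.mp (Subgroup.mem_subgroupOf.mp k.2)).2⟩ : H) • x
  one_smul x := by
    show (⟨g⁻¹ * _ * g, _⟩ : H) • x = x
    have h1 : (⟨g⁻¹ * (((1 : (K ⊓ conjSub H g).subgroupOf K) : K) : G) * g,
        (Subgroup.mem_inf.mp (Subgroup.mem_subgroupOf.mp
          (1 : (K ⊓ conjSub H g).subgroupOf K).2)).2⟩ : H) = 1 := by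
      ext
      simp
    rw [h1, one_smul]
  mul_smul a b x := by
    show (⟨g⁻¹ * _ * g, _⟩ : H) • x = (⟨g⁻¹ * _ * g, _⟩ : H) • ((⟨g⁻¹ * _ * g, _⟩ : H) • x)
    rw [← mul_smul]
    congr 1
    ext
    show g⁻¹ * (((a * b : (K ⊓ conjSub H g).subgroupOf K) : K) : G) * g
      = (g⁻¹ * ((a : K) : G) * g) * (g⁻¹ * ((b : K) : G) * g)
    push_cast
    group

/-! Every `x : G` factors as `k * g i * h` with `k ∈ K`, `h ∈ H`, and `i` unique, so an
`H`-equivariant `f : G → X` is determined by the functions `c ↦ f (c * g i)` on `K`. Conversely,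
from such `Fᵢ` one sets `f (k * g i * h) = h⁻¹ • Fᵢ k`. This is well defined because two
factorisations `k * g i * h = k' * g i * h'` differ by `u = k'⁻¹ * k ∈ K ⊓ g i H (g i)⁻¹` with
`(g i)⁻¹ * u * g i = h' * h⁻¹`, and that is exactly the equivariance of `Fᵢ` under `H_{g i}`. -/

section Mackey

variable {H K : Subgroup G} {X : Type} [MulAction H X]

def dcConj (g : G) : (K ⊓ conjSub H g).subgroupOf K →* H where
  toFun u := ⟨g⁻¹ * u * g, (Subgroup.mem_inf.mp (Subgroup.mem_subgroupOf.mp u.2)).2⟩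
  map_one' := by ext; simp
  map_mul' u v := by ext; simp only [Subgroup.coe_mul]; group

@[simp]
theorem coe_dcConj (g : G) (u : (K ⊓ conjSub H g).subgroupOf K) :
    (dcConj g u : G) = g⁻¹ * u * g :=
  rfl

variable (H K) in
abbrev MackeyFactor (g : G) (X : Type) [MulAction H X] : Type :=
  @Coind K _ ((K ⊓ conjSub H g).subgroupOf K) X (dcAction H K g X)

namespace MackeyFactor

variable {g : G}

theorem apply_mul (F : MackeyFactor H K g X) (c : K) (u : (K ⊓ conjSub H g).subgroupOf K) :
    F.1 (c * u) = (dcConj g u)⁻¹ • F.1 c := by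
  rw [F.2 c u, ← map_inv]
  rfl

theorem inv_smul_apply_eq_of_mul_eq (F : MackeyFactor H K g X) {k k' : K} {h h' : H}
    (heq : (k : G) * g * h = k' * g * h') : h⁻¹ • F.1 k = h'⁻¹ • F.1 k' := by
  have hconj : g⁻¹ * (k'⁻¹ * k : K) * g = (h' * h⁻¹ : H) :=
    calc g⁻¹ * (k'⁻¹ * k : K) * g = g⁻¹ * k'⁻¹ * ((k : G) * g * h) * h⁻¹ := by
          push_cast; group
      _ = (h' * h⁻¹ : H) := by rw [heq]; push_cast; group
  let u : (K ⊓ conjSub H g).subgroupOf K := ⟨k'⁻¹ * k, Subgroup.mem_subgroupOf.mpr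
    (Subgroup.mem_inf.mpr ⟨(k'⁻¹ * k).2, show _ ∈ H from hconj ▸ (h' * h⁻¹).2⟩)⟩
  have hk : k = k' * u := by simp [u]
  have hu : dcConj g u = h' * h⁻¹ := Subtype.ext hconj
  rw [hk, apply_mul, hu, smul_smul, mul_inv_rev, inv_inv, inv_mul_cancel_left]

end MackeyFactor

variable {ι : Type*} {g : ι → G}

def restrictToReps (g : ι → G) (f : Coind H X) (i : ι) : MackeyFactor H K (g i) X :=
  ⟨fun c => f.1 (c * g i), fun c u => by
    show f.1 (((c * u : K) : G) * g i) = dcConj (g i) u⁻¹ • f.1 (c * g i)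
    have : ((c * u : K) : G) * g i = c * g i * dcConj (g i) u := by
      simp only [Subgroup.coe_mul, coe_dcConj]; group
    rw [this, f.2, map_inv]⟩

theorem exists_mul_mul_eq (hg : Function.Surjective fun i => DoubleCoset.mk K H (g i)) (x : G) :
    ∃ p : ι × K × H, (p.2.1 : G) * g p.1 * p.2.2 = x := by
  obtain ⟨i, hi⟩ := hg (DoubleCoset.mk K H x)
  obtain ⟨k, hk, h, hh, rfl⟩ := (DoubleCoset.eq K H (g i) x).mp hi
  exact ⟨(i, ⟨k, hk⟩, ⟨h, hh⟩), rfl⟩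

theorem eq_of_mul_mul_eq (hg : Function.Injective fun i => DoubleCoset.mk K H (g i)) {i j : ι}
    {k k' : K} {h h' : H} (heq : (k : G) * g i * h = k' * g j * h') : i = j := by
  refine hg ((DoubleCoset.eq K H (g i) _).mpr ⟨k, k.2, h, h.2, rfl⟩ |>.trans ?_)
  rw [heq]
  exact ((DoubleCoset.eq K H (g j) _).mpr ⟨k', k'.2, h', h'.2, rfl⟩).symm

theorem inv_smul_apply_eq_of_mul_mul_eq
    (hg : Function.Injective fun i => DoubleCoset.mk K H (g i))
    (F : ∀ i, MackeyFactor H K (g i) X) {i j : ι} {k k' : K} {h h' : H}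
    (heq : (k : G) * g i * h = k' * g j * h') : h⁻¹ • (F i).1 k = h'⁻¹ • (F j).1 k' := by
  obtain rfl := eq_of_mul_mul_eq hg heq
  exact (F i).inv_smul_apply_eq_of_mul_eq heq

noncomputable def doubleCosetDecomp (hg : Function.Surjective fun i => DoubleCoset.mk K H (g i))
    (x : G) : ι × K × H :=
  (exists_mul_mul_eq hg x).choose

theorem doubleCosetDecomp_spec (hg : Function.Surjective fun i => DoubleCoset.mk K H (g i))
    (x : G) :
    ((doubleCosetDecomp hg x).2.1 : G) * g (doubleCosetDecomp hg x).1
      * (doubleCosetDecomp hg x).2.2 = x :=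
  (exists_mul_mul_eq hg x).choose_spec

noncomputable def extendFromReps (hg : Function.Bijective fun i => DoubleCoset.mk K H (g i))
    (F : ∀ i, MackeyFactor H K (g i) X) : Coind H X :=
  ⟨fun x => (doubleCosetDecomp hg.2 x).2.2⁻¹ •
      (F (doubleCosetDecomp hg.2 x).1).1 (doubleCosetDecomp hg.2 x).2.1, fun x h => by
    rw [smul_smul, ← mul_inv_rev]
    refine inv_smul_apply_eq_of_mul_mul_eq hg.1 F ?_
    rw [doubleCosetDecomp_spec, Subgroup.coe_mul, ← mul_assoc, doubleCosetDecomp_spec]⟩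

theorem extendFromReps_apply (hg : Function.Bijective fun i => DoubleCoset.mk K H (g i))
    (F : ∀ i, MackeyFactor H K (g i) X) (i : ι) (k : K) (h : H) :
    (extendFromReps hg F).1 (k * g i * h) = h⁻¹ • (F i).1 k :=
  inv_smul_apply_eq_of_mul_mul_eq hg.1 F (doubleCosetDecomp_spec hg.2 _)

noncomputable def mackeyEquiv (hg : Function.Bijective fun i => DoubleCoset.mk K H (g i)) :
    Coind H X ≃ ∀ i, MackeyFactor H K (g i) X where
  toFun := restrictToReps g
  invFun := extendFromReps hg
  left_inv f := Subtype.ext <| funext fun x => by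
    conv_rhs => rw [← doubleCosetDecomp_spec hg.2 x, f.2]
    rfl
  right_inv F := funext fun i => Subtype.ext <| funext fun c => by
    show (extendFromReps hg F).1 (c * g i) = (F i).1 c
    simpa using extendFromReps_apply hg F i c 1

theorem mackeyEquiv_smul (hg : Function.Bijective fun i => DoubleCoset.mk K H (g i))
    (k : K) (f : Coind H X) (i : ι) (c : K) :
    (mackeyEquiv hg ((k : G) • f) i).1 c = (mackeyEquiv hg f i).1 (k⁻¹ * c) := by
  show f.1 ((k : G)⁻¹ * (c * g i)) = f.1 ((k⁻¹ * c : K) * g i)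
  rw [Subgroup.coe_mul, Subgroup.coe_inv, mul_assoc]

end Mackey

theorem stmt_6_general (H K : Subgroup G) (X : Type) [MulAction H X]
    (r : ℕ) (g : Fin r → G)
    (hg : Function.Bijective fun i : Fin r => DoubleCoset.mk K H (g i)) :
    ∃ e : Coind H X ≃
        (∀ i : Fin r, @Coind K _ ((K ⊓ conjSub H (g i)).subgroupOf K) X
          (dcAction H K (g i) X)),
      ∀ (k : K) (f : Coind H X) (i : Fin r) (c : K),
        ((e ((k : G) • f)) i).1 c = ((e f) i).1 (k⁻¹ * c) :=
  ⟨mackeyEquiv hg, mackeyEquiv_smul hg⟩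

/-- Mackey double coset formula for coinduction of `G`-sets:
`Res_K^G Coind_H^G X ≅ ∏ᵢ Coind_{H_{gᵢ}}^K Res_{H_{gᵢ}}^H X`, `K`-equivariantly,
where `g₁, …, g_r` are double coset representatives for `K \ G / H` and
`H_g = K ∩ gHg⁻¹` acts on `X` by `h • x = (g⁻¹hg) • x`. -/
theorem stmt_6 [Finite G] (H K : Subgroup G) (X : Type) [MulAction H X]
    (r : ℕ) (g : Fin r → G)
    (hg : Function.Bijective fun i : Fin r => DoubleCoset.mk K H (g i)) :
    ∃ e : Coind H X ≃
        (∀ i : Fin r, @Coind K _ ((K ⊓ conjSub H (g i)).subgroupOf K) X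
          (dcAction H K (g i) X)),
      ∀ (k : K) (f : Coind H X) (i : Fin r) (c : K),
        ((e ((k : G) • f)) i).1 c = ((e f) i).1 (k⁻¹ * c) :=
  stmt_6_general H K X r g hg
end
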